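/- arXiv:1511.04578 — 5 statements merged into one kernel-verified Lean document; each statement's English description precedes it below -/
import Mathlib

section
/- Fix 0 < r < 1 and set β with sin β = 2r/(1+r²), β ∈ (0, π/2). Then the union over x ∈ (-1,1) of the Euclidean disks K(C_x, R_x), where C_x = ((1+r²)/(1-r²))((1+x)/(1-x)) and R_x = (2r/(1-r²))((1+x)/(1-x)), equals the open sector {w : |arg w| < β}. -/
set_option maxHeartbeats 1000000


open Complex

lemma mem_ball_real_iff (z : ℂ) (c ρ : ℝ) (hρ : 0 < ρ) :
    z ∈ Metric.ball (c : ℂ) ρ ↔ (z.re - c) ^ 2 + z.im ^ 2 < ρ ^ 2 := by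
  rw [Metric.mem_ball, Complex.dist_eq_re_im]
  simp only [Complex.ofReal_re, Complex.ofReal_im, sub_zero]
  exact Real.sqrt_lt' hρ

theorem union_of_disks_eq_sector (r : ℝ) (hr0 : 0 < r) (hr1 : r < 1)
    (β : ℝ) (hβ : β ∈ Set.Ioo 0 (Real.pi / 2)) (hsin : Real.sin β = 2 * r / (1 + r ^ 2)) :
    (⋃ x ∈ Set.Ioo (-1 : ℝ) 1,
        Metric.ball ((((1 + r ^ 2) / (1 - r ^ 2)) * ((1 + x) / (1 - x)) : ℝ) : ℂ)
          ((2 * r / (1 - r ^ 2)) * ((1 + x) / (1 - x)))) =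
      {w : ℂ | 0 < w.re ∧ |w.im| < Real.tan β * w.re} := by
  obtain ⟨hβ0, hβ2⟩ := hβ
  have hr2 : 0 < 1 - r ^ 2 := by nlinarith
  have hr2' : 0 < 1 + r ^ 2 := by positivity
  set a : ℝ := (1 + r ^ 2) / (1 - r ^ 2) with ha
  set b : ℝ := 2 * r / (1 - r ^ 2) with hb
  have hb0 : 0 < b := by rw [hb]; positivity
  have ha0 : 0 < a := by rw [ha]; positivity
  have hab : a ^ 2 = 1 + b ^ 2 := by
    rw [ha, hb]; field_simp; ring
  have hc : 0 < Real.cos β := Real.cos_pos_of_mem_Ioo ⟨by linarith [Real.pi_pos], hβ2⟩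
  have hcos : Real.cos β = (1 - r ^ 2) / (1 + r ^ 2) := by
    have h1 := Real.sin_sq_add_cos_sq β
    rw [hsin] at h1
    have h2 : Real.cos β ^ 2 = ((1 - r ^ 2) / (1 + r ^ 2)) ^ 2 := by
      field_simp at h1 ⊢; nlinarith [h1]
    have h3 : 0 < (1 - r ^ 2) / (1 + r ^ 2) := by positivity
    nlinarith [h2, hc, h3]
  have htan : Real.tan β = b := by
    rw [Real.tan_eq_sin_div_cos, hsin, hcos, hb]
    rw [div_div_div_eq]
    rw [div_eq_div_iff (by positivity) (by positivity)]
    ring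
  clear_value a b
  clear ha hb hcos hc hsin
  ext w
  simp only [Set.mem_iUnion, Set.mem_setOf_eq, htan]
  constructor
  · rintro ⟨x, hx, hw⟩
    obtain ⟨hx1, hx2⟩ := hx
    set t : ℝ := (1 + x) / (1 - x) with htdef
    have ht : 0 < t := div_pos (by linarith) (by linarith)
    clear_value t
    rw [mem_ball_real_iff _ _ _ (mul_pos hb0 ht)] at hw
    have habt : (a * t) ^ 2 = t ^ 2 + (b * t) ^ 2 := by
      linear_combination t ^ 2 * hab
    have habu : a ^ 2 * w.re ^ 2 = w.re ^ 2 + b ^ 2 * w.re ^ 2 := by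
      linear_combination w.re ^ 2 * hab
    have hu : 0 < w.re := by
      nlinarith [sq_nonneg w.im, mul_pos ha0 ht, mul_pos ht ht, habt]
    refine ⟨hu, ?_⟩
    have key : w.im ^ 2 < (b * w.re) ^ 2 := by
      nlinarith [sq_nonneg (a * w.re - t), habt, habu, hw]
    nlinarith [_root_.sq_abs w.im, abs_nonneg w.im, mul_pos hb0 hu, key]
  · rintro ⟨hu, hv⟩
    have hau : 0 < a * w.re := mul_pos ha0 hu
    refine ⟨(a * w.re - 1) / (a * w.re + 1), ⟨?_, ?_⟩, ?_⟩
    · rw [lt_div_iff₀ (by linarith : (0:ℝ) < a * w.re + 1)]; nlinarith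
    · rw [div_lt_one (by linarith : (0:ℝ) < a * w.re + 1)]; linarith
    · have hne : a * w.re + 1 ≠ 0 := by linarith
      have hxval : (1 + (a * w.re - 1) / (a * w.re + 1)) / (1 - (a * w.re - 1) / (a * w.re + 1))
          = a * w.re := by
        have hpos : 0 < 1 - (a * w.re - 1) / (a * w.re + 1) := by
          rw [sub_pos, div_lt_one (by linarith : (0:ℝ) < a * w.re + 1)]; linarith
        rw [div_eq_iff (ne_of_gt hpos)]
        field_simp
        ring
      rw [hxval, mem_ball_real_iff _ _ _ (mul_pos hb0 hau)]
      have hv2 : w.im ^ 2 < (b * w.re) ^ 2 := by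
        nlinarith [_root_.sq_abs w.im, abs_nonneg w.im, hv]
      have e1 : w.re - a * (a * w.re) = -(b ^ 2 * w.re) := by
        linear_combination (-w.re) * hab
      have e2 : (b * (a * w.re)) ^ 2 = (b ^ 2 * w.re) ^ 2 + (b * w.re) ^ 2 := by
        linear_combination (b ^ 2 * w.re ^ 2) * hab
      rw [e1, e2]
      nlinarith [hv2]
end

section
/- Fix 0 < r < 1. The union U = ⋃_{x ∈ (-1,1)} D_ρ(x,r) of all pseudohyperbolic disks of radius r centered on the real axis is contained in the cone Δ(β) = {z ∈ D : |Im z| < tan β · (1 - Re z)} with tan β = 2r/(1-r²). -/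
/-!
The pseudohyperbolic disk `D_ρ(x, r)` with real centre `x` is the Euclidean disk with centre
`c = x(1 - r²)/(1 - r²x²)` and radius `R = r(1 - x²)/(1 - r²x²)`. A disk centred at `c < 1` on the
real axis lies in the cone of half-angle `β` at `1` as soon as `R ≤ (1 - c) sin β`, and with
`sin β = 2r/(1 + r²)` this reduces to `(1 - x)(1 - r²) ≥ 0`.
-/

open Complex

noncomputable def pseudohyperbolicDiskCenter (x r : ℝ) : ℝ := x * (1 - r ^ 2) / (1 - r ^ 2 * x ^ 2)

noncomputable def pseudohyperbolicDiskRadius (x r : ℝ) : ℝ := r * (1 - x ^ 2) / (1 - r ^ 2 * x ^ 2)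

theorem sq_mul_sq_lt_one {x r : ℝ} (hx : |x| < 1) (hr : |r| < 1) : r ^ 2 * x ^ 2 < 1 := by
  rw [← mul_pow, ← sq_abs, abs_mul]
  exact pow_lt_one₀ (by positivity) (mul_lt_one_of_nonneg_of_lt_one_left (abs_nonneg r) hr hx.le)
    two_ne_zero

theorem pseudohyperbolicDiskRadius_pos {x r : ℝ} (hx : |x| < 1) (hr0 : 0 < r) (hr1 : r < 1) :
    0 < pseudohyperbolicDiskRadius x r := by
  have hD := sq_mul_sq_lt_one hx (abs_lt.2 ⟨by linarith, hr1⟩)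
  have hx2 : x ^ 2 < 1 := by rwa [← sq_abs, sq_lt_one_iff₀ (abs_nonneg x)]
  exact div_pos (mul_pos hr0 (by linarith)) (by linarith)

theorem norm_sub_pseudohyperbolicDiskCenter_lt {x r : ℝ} {z : ℂ} (hx : |x| < 1) (hr1 : r < 1)
    (hz : ‖z‖ < 1) (h : ‖(z - x) / (1 - x * z)‖ < r) :
    ‖z - pseudohyperbolicDiskCenter x r‖ < pseudohyperbolicDiskRadius x r := by
  have hr0 : 0 < r := (norm_nonneg _).trans_lt h
  have hD : 0 < 1 - r ^ 2 * x ^ 2 := sub_pos.2 (sq_mul_sq_lt_one hx (abs_lt.2 ⟨by linarith, hr1⟩))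
  have hden : 0 < ‖1 - x * z‖ := by
    refine norm_pos_iff.2 (sub_ne_zero.2 fun h1 => ?_)
    have : ‖(x : ℂ) * z‖ < 1 := by
      rw [norm_mul, norm_real, Real.norm_eq_abs]
      exact mul_lt_one_of_nonneg_of_lt_one_left (abs_nonneg x) hx hz.le
    simp [← h1] at this
  rw [norm_div, div_lt_iff₀ hden] at h
  have key : pseudohyperbolicDiskRadius x r ^ 2 - ‖z - pseudohyperbolicDiskCenter x r‖ ^ 2 =
      (r ^ 2 * ‖1 - x * z‖ ^ 2 - ‖z - x‖ ^ 2) / (1 - r ^ 2 * x ^ 2) := by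
    simp only [pseudohyperbolicDiskRadius, pseudohyperbolicDiskCenter, Complex.sq_norm, normSq_apply,
      sub_re, sub_im, mul_re, mul_im, one_re, one_im, ofReal_re, ofReal_im]
    field_simp
    ring
  have hsq : ‖z - pseudohyperbolicDiskCenter x r‖ ^ 2 < pseudohyperbolicDiskRadius x r ^ 2 := by
    rw [← sub_pos, key]
    exact div_pos (by nlinarith [norm_nonneg (z - x)]) hD
  exact lt_of_pow_lt_pow_left₀ 2 (pseudohyperbolicDiskRadius_pos hx hr0 hr1).le hsq

theorem mul_abs_im_lt_of_norm_sub_lt {w : ℂ} {c R p q : ℝ} (hp : 0 < p) (hw : ‖w - c‖ < R)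
    (hR : R * √(p ^ 2 + q ^ 2) ≤ p * (1 - c)) : q * |w.im| < p * (1 - w.re) := by
  have hs : 0 < √(p ^ 2 + q ^ 2) := Real.sqrt_pos.2 (by positivity)
  -- `p (Re w - c) ± q Im w` is the real part of `(p ∓ q i)(w - c)`, of modulus `√(p² + q²) ‖w - c‖`.
  have bound (ε : ℝ) (hε : ε ^ 2 = 1) : p * (w.re - c) + ε * q * w.im < p * (1 - c) := by
    have hre := re_le_norm ((p + ((-(ε * q) : ℝ) : ℂ) * I) * (w - c))
    rw [norm_mul, norm_add_mul_I, neg_sq, mul_pow, hε, one_mul] at hre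
    simp only [mul_re, mul_im, add_re, add_im, sub_re, sub_im, ofReal_re, ofReal_im, I_re, I_im] at hre
    calc p * (w.re - c) + ε * q * w.im ≤ √(p ^ 2 + q ^ 2) * ‖w - c‖ := by linarith
      _ < √(p ^ 2 + q ^ 2) * R := mul_lt_mul_of_pos_left hw hs
      _ ≤ p * (1 - c) := by linarith
  rcases abs_cases w.im with ⟨him, -⟩ | ⟨him, -⟩ <;> rw [him]
  · linarith [bound 1 (one_pow 2)]
  · linarith [bound (-1) (by norm_num)]

theorem pseudohyperbolicDiskRadius_mul_le {x r : ℝ} (hx : |x| < 1) (hr0 : 0 ≤ r) (hr1 : r < 1) :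
    pseudohyperbolicDiskRadius x r * (1 + r ^ 2) ≤ 2 * r * (1 - pseudohyperbolicDiskCenter x r) := by
  have hD : 0 < 1 - r ^ 2 * x ^ 2 := sub_pos.2 (sq_mul_sq_lt_one hx (abs_lt.2 ⟨by linarith, hr1⟩))
  rw [pseudohyperbolicDiskRadius, pseudohyperbolicDiskCenter, div_mul_eq_mul_div, one_sub_div hD.ne',
    mul_div_assoc', div_le_div_iff_of_pos_right hD, ← sub_nonneg]
  have hgap : 2 * r * (1 - r ^ 2 * x ^ 2 - x * (1 - r ^ 2)) - r * (1 - x ^ 2) * (1 + r ^ 2) =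
      r * (1 - x) ^ 2 * (1 - r ^ 2) := by ring
  rw [hgap]
  exact mul_nonneg (by positivity) (by nlinarith)

theorem union_pseudohyperbolic_disks_subset_cone_general (r : ℝ) (hr1 : r < 1) :
    (⋃ x ∈ Set.Ioo (-1 : ℝ) 1,
        {z : ℂ | ‖z‖ < 1 ∧ ‖(z - (x : ℂ)) / (1 - (x : ℂ) * z)‖ < r}) ⊆
      {z : ℂ | ‖z‖ < 1 ∧ |z.im| < (2 * r / (1 - r ^ 2)) * (1 - z.re)} := by
  intro z hz
  simp only [Set.mem_iUnion, Set.mem_ofPred_eq] at hz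
  obtain ⟨x, hx, hz1, hρ⟩ := hz
  have hx : |x| < 1 := abs_lt.2 hx
  have hr0 : 0 < r := (norm_nonneg _).trans_lt hρ
  have hr2 : 0 < 1 - r ^ 2 := by nlinarith
  have hsqrt : √((2 * r) ^ 2 + (1 - r ^ 2) ^ 2) = 1 + r ^ 2 := by
    rw [show (2 * r) ^ 2 + (1 - r ^ 2) ^ 2 = (1 + r ^ 2) ^ 2 by ring, Real.sqrt_sq (by positivity)]
  have hcone := mul_abs_im_lt_of_norm_sub_lt (by positivity)
    (norm_sub_pseudohyperbolicDiskCenter_lt hx hr1 hz1 hρ)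
    (hsqrt ▸ pseudohyperbolicDiskRadius_mul_le hx hr0.le hr1)
  refine ⟨hz1, ?_⟩
  rw [div_mul_eq_mul_div, lt_div_iff₀ hr2]
  linarith

theorem union_pseudohyperbolic_disks_subset_cone (r : ℝ) (hr0 : 0 < r) (hr1 : r < 1) :
    (⋃ x ∈ Set.Ioo (-1 : ℝ) 1,
        {z : ℂ | ‖z‖ < 1 ∧ ‖(z - (x : ℂ)) / (1 - (x : ℂ) * z)‖ < r}) ⊆
      {z : ℂ | ‖z‖ < 1 ∧ |z.im| < (2 * r / (1 - r ^ 2)) * (1 - z.re)} :=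
  union_pseudohyperbolic_disks_subset_cone_general r hr1
end

section
/- Fix 0 < r < 1. The union ⋃_{x∈(-1,1)} D_ρ(x,r) equals the set of points z in the unit disk lying strictly between the circle of center -i(1-r²)/(2r) and radius (1+r²)/(2r) and its reflection across the real axis; i.e., z ∈ ⋃_x D_ρ(x,r) iff |z + i(1-r²)/(2r)| < (1+r²)/(2r) and |z - i(1-r²)/(2r)| < (1+r²)/(2r). -/
/-!
For fixed `z`, `|z - x|² - r² |1 - x z|²` is a quadratic polynomial in the real variable `x` with
leading coefficient `1 - r² |z|² > 0`. Completing the square shows that it takes a negative value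
iff `|Im z| (1 - r²) < r (1 - |z|²)`, and its minimiser `(1 - r²) Re z / (1 - r² |z|²)` lies in
`(-1, 1)`. Because `((1 + r²)/(2r))² - ((1 - r²)/(2r))² = 1`, both circles pass through `±1`, and the
same inequality describes the lens between them.
-/

open Complex

lemma norm_lt_iff_normSq_lt {w : ℂ} {c : ℝ} (hc : 0 ≤ c) : ‖w‖ < c ↔ normSq w < c ^ 2 := by
  rw [← Complex.sq_norm, sq_lt_sq₀ (norm_nonneg w) hc]

lemma norm_div_lt_iff_normSq_lt {w v : ℂ} {r : ℝ} (hv : v ≠ 0) (hr : 0 ≤ r) :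
    ‖w / v‖ < r ↔ normSq w < r ^ 2 * normSq v := by
  rw [norm_lt_iff_normSq_lt hr, normSq_div, div_lt_iff₀ (normSq_pos.2 hv)]

lemma one_sub_ofReal_mul_ne_zero {x : ℝ} {z : ℂ} (hx : |x| < 1) (hz : ‖z‖ < 1) :
    1 - (x : ℂ) * z ≠ 0 := by
  refine sub_ne_zero.2 fun h => ?_
  have : ‖(x : ℂ) * z‖ < 1 := by
    rw [norm_mul, norm_real, Real.norm_eq_abs]
    nlinarith [abs_nonneg x, norm_nonneg z]
  simp [← h] at this

lemma normSq_add_I_mul_ofReal (z : ℂ) (c : ℝ) :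
    normSq (z + I * c) = normSq z + 2 * c * z.im + c ^ 2 := by
  simp only [normSq_apply, add_re, add_im, mul_re, mul_im, I_re, I_im, ofReal_re, ofReal_im]
  ring

lemma norm_add_I_mul_ofReal_lt_iff {z : ℂ} {c R : ℝ} (hR : 0 ≤ R) :
    ‖z + I * c‖ < R ↔ normSq z + 2 * c * z.im < R ^ 2 - c ^ 2 := by
  rw [norm_lt_iff_normSq_lt hR, normSq_add_I_mul_ofReal, lt_sub_iff_add_lt]

lemma lens_iff_abs_im_mul_lt {r : ℝ} (hr : 0 < r) (z : ℂ) :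
    (‖z + I * ((1 - r ^ 2) / (2 * r))‖ < (1 + r ^ 2) / (2 * r) ∧
      ‖z - I * ((1 - r ^ 2) / (2 * r))‖ < (1 + r ^ 2) / (2 * r)) ↔
      |z.im * (1 - r ^ 2)| < r * (1 - normSq z) := by
  have hR : 0 ≤ (1 + r ^ 2) / (2 * r) := by positivity
  have hRc : ((1 + r ^ 2) / (2 * r)) ^ 2 - ((1 - r ^ 2) / (2 * r)) ^ 2 = 1 := by
    field_simp; ring
  have hc : ((1 : ℂ) - (r : ℂ) ^ 2) / (2 * r) = (((1 - r ^ 2) / (2 * r) : ℝ) : ℂ) := by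
    push_cast; ring
  have hsub : ∀ c : ℝ, z - I * c = z + I * ((-c : ℝ) : ℂ) := fun c => by push_cast; ring
  rw [hc, hsub, norm_add_I_mul_ofReal_lt_iff hR, norm_add_I_mul_ofReal_lt_iff hR, neg_sq, hRc,
    abs_lt]
  have key : ∀ b : ℝ, normSq z + 2 * ((1 - r ^ 2) / (2 * r)) * b < 1 ↔
      b * (1 - r ^ 2) < r * (1 - normSq z) := fun b => by
    rw [← mul_lt_mul_iff_right₀ hr, show 2 * ((1 - r ^ 2) / (2 * r)) = (1 - r ^ 2) / r by
      field_simp, mul_add, ← mul_assoc, mul_div_cancel₀ _ hr.ne']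
    constructor <;> intro h <;> linarith
  rw [key, mul_neg, neg_mul_comm, key, neg_mul, neg_lt, and_comm]

lemma mul_normSq_sub_ofReal_sub_eq (z : ℂ) (x r : ℝ) :
    (1 - r ^ 2 * normSq z) * (normSq (z - x) - r ^ 2 * normSq (1 - x * z)) =
      ((1 - r ^ 2 * normSq z) * x - (1 - r ^ 2) * z.re) ^ 2 +
        ((z.im * (1 - r ^ 2)) ^ 2 - (r * (1 - normSq z)) ^ 2) := by
  simp only [normSq_apply, sub_re, sub_im, mul_re, mul_im, one_re, one_im, ofReal_re, ofReal_im]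
  ring

lemma abs_im_mul_lt_of_normSq_sub_lt {r x : ℝ} {z : ℂ} (hr0 : 0 ≤ r) (hr1 : r < 1)
    (hz : ‖z‖ < 1) (h : normSq (z - x) < r ^ 2 * normSq (1 - x * z)) :
    |z.im * (1 - r ^ 2)| < r * (1 - normSq z) := by
  rw [norm_lt_iff_normSq_lt zero_le_one, one_pow] at hz
  have hq : 0 < 1 - r ^ 2 * normSq z := by nlinarith [normSq_nonneg z]
  have hneg := mul_neg_of_pos_of_neg hq (sub_neg.2 h)
  rw [mul_normSq_sub_ofReal_sub_eq] at hneg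
  have hsq : (z.im * (1 - r ^ 2)) ^ 2 < (r * (1 - normSq z)) ^ 2 := by
    nlinarith [sq_nonneg ((1 - r ^ 2 * normSq z) * x - (1 - r ^ 2) * z.re)]
  exact abs_lt_of_sq_lt_sq hsq (mul_nonneg hr0 (sub_nonneg.2 hz.le))

lemma norm_lt_one_of_abs_im_mul_lt {r : ℝ} {z : ℂ} (hr : 0 ≤ r)
    (h : |z.im * (1 - r ^ 2)| < r * (1 - normSq z)) : ‖z‖ < 1 := by
  rw [norm_lt_iff_normSq_lt zero_le_one, one_pow]
  nlinarith [abs_nonneg (z.im * (1 - r ^ 2))]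

lemma abs_mul_re_lt_one_sub_mul_normSq {r : ℝ} {z : ℂ} (hr0 : 0 ≤ r) (hr1 : r < 1)
    (hz : ‖z‖ < 1) : |(1 - r ^ 2) * z.re| < 1 - r ^ 2 * normSq z := by
  have hre : |z.re| ≤ ‖z‖ := abs_re_le_norm z
  rw [abs_mul, abs_of_pos (by nlinarith : (0 : ℝ) < 1 - r ^ 2), ← Complex.sq_norm]
  -- `1 - r² t² - (1 - r²) t = (1 - t) (1 + r² t)` with `t = |z|`
  nlinarith [mul_pos (sub_pos.2 hz) (by positivity : 0 < 1 + r ^ 2 * ‖z‖),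
    mul_le_mul_of_nonneg_left hre (by nlinarith : (0 : ℝ) ≤ 1 - r ^ 2)]

lemma exists_mem_Ioo_normSq_sub_lt {r : ℝ} {z : ℂ} (hr0 : 0 ≤ r) (hr1 : r < 1) (hz : ‖z‖ < 1)
    (h : |z.im * (1 - r ^ 2)| < r * (1 - normSq z)) :
    ∃ x ∈ Set.Ioo (-1 : ℝ) 1, normSq (z - x) < r ^ 2 * normSq (1 - x * z) := by
  have hx := abs_mul_re_lt_one_sub_mul_normSq hr0 hr1 hz
  have hq : 0 < 1 - r ^ 2 * normSq z := (abs_nonneg _).trans_lt hx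
  refine ⟨(1 - r ^ 2) * z.re / (1 - r ^ 2 * normSq z), ?_, ?_⟩
  · rw [Set.mem_Ioo, ← abs_lt, abs_div, abs_of_pos hq, div_lt_one hq]
    exact hx
  · have hsq : (z.im * (1 - r ^ 2)) ^ 2 < (r * (1 - normSq z)) ^ 2 :=
      sq_lt_sq' (neg_lt_of_abs_lt h) (lt_of_abs_lt h)
    have hneg := mul_normSq_sub_ofReal_sub_eq z ((1 - r ^ 2) * z.re / (1 - r ^ 2 * normSq z)) r
    rw [mul_div_cancel₀ _ hq.ne', sub_self, zero_pow two_ne_zero, zero_add] at hneg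
    exact sub_neg.1 (neg_of_mul_neg_right (hneg ▸ sub_neg.2 hsq) hq.le)

theorem union_pseudohyperbolic_disks_eq_lens (r : ℝ) (hr0 : 0 < r) (hr1 : r < 1) (z : ℂ) :
    (z ∈ ⋃ x ∈ Set.Ioo (-1 : ℝ) 1,
        {z : ℂ | ‖z‖ < 1 ∧ ‖(z - (x : ℂ)) / (1 - (x : ℂ) * z)‖ < r}) ↔
      ‖z + Complex.I * ((1 - r ^ 2) / (2 * r))‖ < (1 + r ^ 2) / (2 * r) ∧
      ‖z - Complex.I * ((1 - r ^ 2) / (2 * r))‖ < (1 + r ^ 2) / (2 * r) := by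
  rw [lens_iff_abs_im_mul_lt hr0]
  simp only [Set.mem_iUnion, Set.mem_ofPred_eq, exists_prop]
  constructor
  · rintro ⟨x, hx, hz, hxz⟩
    rw [norm_div_lt_iff_normSq_lt (one_sub_ofReal_mul_ne_zero (abs_lt.2 hx) hz) hr0.le] at hxz
    exact abs_im_mul_lt_of_normSq_sub_lt hr0.le hr1 hz hxz
  · intro h
    have hz := norm_lt_one_of_abs_im_mul_lt hr0.le h
    obtain ⟨x, hx, hxz⟩ := exists_mem_Ioo_normSq_sub_lt hr0.le hr1 hz h
    refine ⟨x, hx, hz, ?_⟩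
    rwa [norm_div_lt_iff_normSq_lt (one_sub_ofReal_mul_ne_zero (abs_lt.2 hx) hz) hr0.le]
end

section
/- Equality case of the Schwarz–Pick Lemma: if f : D → D is holomorphic and ρ(f(z₀),f(w₀)) = ρ(z₀,w₀) for some pair z₀ ≠ w₀ in D, then f is a conformal automorphism of D, i.e., f(z) = e^{iθ}(a-z)/(1-conj(a)z) for some a ∈ D and θ ∈ [0,2π). -/
/-!
Conjugating `f` by the disk involutions `φ_a z = (a - z) / (1 - conj a * z)`, which exchange `a`
and `0`, gives `g = φ_{f z₀} ∘ f ∘ φ_{z₀}` with `g 0 = 0` and `‖g z₁‖ = ‖z₁‖` at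
`z₁ = φ_{z₀} w₀ ≠ 0`. By the equality case of the Schwarz lemma `g` is a rotation `z ↦ C z`, so
`f = φ_{f z₀} ∘ (C * ·) ∘ φ_{z₀}`, and such a composite is again a rotated disk involution.
-/

open ComplexConjugate Metric

namespace Complex

noncomputable def diskInvolution (a z : ℂ) : ℂ := (a - z) / (1 - conj a * z)

variable {a b c z : ℂ}

theorem one_sub_conj_mul_ne_zero (ha : ‖a‖ < 1) (hz : ‖z‖ ≤ 1) : 1 - conj a * z ≠ 0 := by
  rw [sub_ne_zero]
  intro h
  have : ‖conj a * z‖ < 1 := by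
    rw [norm_mul, norm_conj]
    nlinarith [norm_nonneg a, norm_nonneg z]
  simp [← h] at this

theorem normSq_one_sub_conj_mul_sub_normSq_sub (a z : ℂ) :
    normSq (1 - conj a * z) - normSq (a - z) = (1 - normSq a) * (1 - normSq z) := by
  simp only [normSq_apply, sub_re, sub_im, mul_re, mul_im, one_re, one_im, conj_re, conj_im]
  ring

theorem norm_diskInvolution_lt_one (ha : ‖a‖ < 1) (hz : ‖z‖ < 1) :
    ‖diskInvolution a z‖ < 1 := by
  have hden := one_sub_conj_mul_ne_zero ha hz.le
  rw [diskInvolution, norm_div, div_lt_one (norm_pos_iff.mpr hden),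
    ← sq_lt_sq₀ (norm_nonneg _) (norm_nonneg _), Complex.sq_norm, Complex.sq_norm, ← sub_pos,
    normSq_one_sub_conj_mul_sub_normSq_sub]
  have ha' : normSq a < 1 := by rw [← Complex.sq_norm]; nlinarith [norm_nonneg a]
  have hz' : normSq z < 1 := by rw [← Complex.sq_norm]; nlinarith [norm_nonneg z]
  exact mul_pos (by linarith) (by linarith)

theorem mapsTo_diskInvolution (ha : ‖a‖ < 1) :
    Set.MapsTo (diskInvolution a) (ball 0 1) (ball 0 1) := fun z hz ↦ by
  rw [mem_ball_zero_iff] at hz ⊢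
  exact norm_diskInvolution_lt_one ha hz

theorem differentiableOn_diskInvolution (ha : ‖a‖ < 1) :
    DifferentiableOn ℂ (diskInvolution a) (ball 0 1) := fun z hz ↦ by
  have hden := one_sub_conj_mul_ne_zero ha (mem_ball_zero_iff.mp hz).le
  unfold diskInvolution
  fun_prop (disch := exact hden)

@[simp]
theorem diskInvolution_self (a : ℂ) : diskInvolution a a = 0 := by
  simp [diskInvolution]

@[simp]
theorem diskInvolution_zero (a : ℂ) : diskInvolution a 0 = a := by
  simp [diskInvolution]

theorem diskInvolution_diskInvolution_eq_mul (ha : ‖a‖ < 1) (hc : ‖c‖ < 1) (hz : ‖z‖ < 1) :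
    diskInvolution c (diskInvolution a z) =
      -((1 - c * conj a) / (1 - conj c * a)) * diskInvolution (diskInvolution a c) z := by
  have hza : 1 - conj a * z ≠ 0 := one_sub_conj_mul_ne_zero ha hz.le
  have hac : 1 - conj c * a ≠ 0 := one_sub_conj_mul_ne_zero hc ha.le
  have hca : 1 - c * conj a ≠ 0 := by
    simpa [mul_comm] using (map_ne_zero conj).2 hac
  -- after `field_simp`, these products are the cleared denominators of the two sides
  have hcz : (1 - conj a * z) * (1 - conj c * diskInvolution a z) ≠ 0 :=
    mul_ne_zero hza (one_sub_conj_mul_ne_zero hc (norm_diskInvolution_lt_one ha hz).le)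
  have hcaz : (1 - conj a * c) * (1 - conj (diskInvolution a c) * z) ≠ 0 :=
    mul_ne_zero (one_sub_conj_mul_ne_zero ha hc.le)
      (one_sub_conj_mul_ne_zero (norm_diskInvolution_lt_one ha hc) hz.le)
  simp only [diskInvolution, map_div₀, map_sub, map_mul, conj_conj, map_one] at *
  field_simp at *
  field_simp
  ring

theorem diskInvolution_diskInvolution (ha : ‖a‖ < 1) (hz : ‖z‖ < 1) :
    diskInvolution a (diskInvolution a z) = z := by
  have haa : 1 - a * conj a ≠ 0 := mul_comm a (conj a) ▸ one_sub_conj_mul_ne_zero ha ha.le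
  rw [diskInvolution_diskInvolution_eq_mul ha ha hz, diskInvolution_self, mul_comm (conj a) a,
    div_self haa]
  simp [diskInvolution]

theorem diskInvolution_mul_of_norm_eq_one {u : ℂ} (hu : ‖u‖ = 1) (b w : ℂ) :
    diskInvolution b (u * w) = u * diskInvolution (conj u * b) w := by
  have hu' : u * conj u = 1 := by
    rw [mul_conj, ← Complex.sq_norm, hu]; norm_num
  unfold diskInvolution
  rw [map_mul, conj_conj, ← mul_div_assoc]
  congr 1
  · linear_combination -b * hu'
  · ring

theorem exists_diskInvolution_mul_diskInvolution_eq {C : ℂ} (hC : ‖C‖ = 1) (ha : ‖a‖ < 1)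
    (hb : ‖b‖ < 1) : ∃ a', ‖a'‖ < 1 ∧ ∃ u, ‖u‖ = 1 ∧
      ∀ z, ‖z‖ < 1 → diskInvolution b (C * diskInvolution a z) = u * diskInvolution a' z := by
  set c := conj C * b
  have hc : ‖c‖ < 1 := by rwa [norm_mul, norm_conj, hC, one_mul]
  have hac : 1 - conj c * a ≠ 0 := one_sub_conj_mul_ne_zero hc ha.le
  refine ⟨diskInvolution a c, norm_diskInvolution_lt_one ha hc,
    C * -((1 - c * conj a) / (1 - conj c * a)), ?_, fun z hz ↦ ?_⟩
  · have hconj : 1 - c * conj a = conj (1 - conj c * a) := by simp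
    rw [norm_mul, hC, norm_neg, hconj, norm_div, norm_conj, div_self (norm_ne_zero_iff.2 hac),
      one_mul]
  · rw [diskInvolution_mul_of_norm_eq_one hC, diskInvolution_diskInvolution_eq_mul ha hc hz,
      ← mul_assoc]

theorem exists_eq_mul_of_norm_apply_eq {g : ℂ → ℂ} (hg : DifferentiableOn ℂ g (ball 0 1))
    (hmaps : Set.MapsTo g (ball 0 1) (ball 0 1)) (hg0 : g 0 = 0) (hz : z ∈ ball 0 1)
    (hz0 : z ≠ 0) (heq : ‖g z‖ = ‖z‖) : ∃ C, ‖C‖ = 1 ∧ ∀ w ∈ ball 0 1, g w = C * w := by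
  have hslope : ‖dslope g 0 z‖ = 1 / 1 := by
    rw [dslope_of_ne g hz0, slope_def_field, hg0, sub_zero, sub_zero, norm_div, heq,
      div_self (norm_ne_zero_iff.mpr hz0), div_one]
  have hmaps' : Set.MapsTo g (ball 0 1) (closedBall (g 0) 1) := by
    rw [hg0]; exact hmaps.mono_right ball_subset_closedBall
  obtain ⟨C, hC, hgC⟩ :=
    affine_of_mapsTo_ball_of_exists_norm_dslope_eq_div' hg hmaps' ⟨z, hz, hslope⟩
  refine ⟨C, by simpa using hC, fun w hw ↦ ?_⟩
  simpa [hg0, mul_comm] using hgC hw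

theorem exists_mem_Ico_exp_mul_I_eq {u : ℂ} (hu : ‖u‖ = 1) :
    ∃ θ ∈ Set.Ico (0 : ℝ) (2 * Real.pi), exp (θ * I) = u := by
  refine ⟨toIcoMod Real.two_pi_pos 0 (arg u),
    by simpa using toIcoMod_mem_Ico Real.two_pi_pos 0 (arg u), ?_⟩
  rw [toIcoMod, zsmul_eq_mul]
  push_cast
  rw [sub_mul, exp_sub, mul_assoc, exp_int_mul_two_pi_mul_I, div_one]
  simpa [hu] using norm_mul_exp_arg_mul_I u

end Complex

open Complex

theorem schwarz_pick_equality_case (f : ℂ → ℂ)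
    (hf : DifferentiableOn ℂ f (Metric.ball (0 : ℂ) 1))
    (hmaps : Set.MapsTo f (Metric.ball (0 : ℂ) 1) (Metric.ball (0 : ℂ) 1))
    (z₀ w₀ : ℂ) (hz₀ : z₀ ∈ Metric.ball (0 : ℂ) 1) (hw₀ : w₀ ∈ Metric.ball (0 : ℂ) 1)
    (hne : z₀ ≠ w₀)
    (heq : ‖(f z₀ - f w₀) / (1 - (starRingEnd ℂ) (f z₀) * f w₀)‖ =
      ‖(z₀ - w₀) / (1 - (starRingEnd ℂ) z₀ * w₀)‖) :
    ∃ a ∈ Metric.ball (0 : ℂ) 1, ∃ θ ∈ Set.Ico (0 : ℝ) (2 * Real.pi),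
      ∀ z ∈ Metric.ball (0 : ℂ) 1,
        f z = Complex.exp (θ * Complex.I) * ((a - z) / (1 - (starRingEnd ℂ) a * z)) := by
  rw [mem_ball_zero_iff] at hz₀ hw₀
  have hb : ‖f z₀‖ < 1 := mem_ball_zero_iff.mp (hmaps (mem_ball_zero_iff.mpr hz₀))
  set g := diskInvolution (f z₀) ∘ f ∘ diskInvolution z₀
  have hgmaps : Set.MapsTo g (ball 0 1) (ball 0 1) :=
    (mapsTo_diskInvolution hb).comp (hmaps.comp (mapsTo_diskInvolution hz₀))
  have hgd : DifferentiableOn ℂ g (ball 0 1) :=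
    (differentiableOn_diskInvolution hb).comp
      (hf.comp (differentiableOn_diskInvolution hz₀) (mapsTo_diskInvolution hz₀))
      (hmaps.comp (mapsTo_diskInvolution hz₀))
  have hg0 : g 0 = 0 := by simp [g]
  set z₁ := diskInvolution z₀ w₀
  have hz₁ : z₁ ∈ ball 0 1 := mapsTo_diskInvolution hz₀ (mem_ball_zero_iff.mpr hw₀)
  have hz₁0 : z₁ ≠ 0 := div_ne_zero (sub_ne_zero.2 hne) (one_sub_conj_mul_ne_zero hz₀ hw₀.le)
  have hgz₁ : ‖g z₁‖ = ‖z₁‖ := by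
    simp only [g, z₁, Function.comp_apply, diskInvolution_diskInvolution hz₀ hw₀]
    exact heq
  obtain ⟨C, hC, hgC⟩ := exists_eq_mul_of_norm_apply_eq hgd hgmaps hg0 hz₁ hz₁0 hgz₁
  obtain ⟨a, ha, u, hu, hfu⟩ := exists_diskInvolution_mul_diskInvolution_eq hC hz₀ hb
  obtain ⟨θ, hθ, rfl⟩ := exists_mem_Ico_exp_mul_I_eq hu
  refine ⟨a, mem_ball_zero_iff.mpr ha, θ, hθ, fun z hz ↦ ?_⟩
  have hz' := mem_ball_zero_iff.mp hz
  calc f z = diskInvolution (f z₀) (g (diskInvolution z₀ z)) := by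
        simp only [g, Function.comp_apply, diskInvolution_diskInvolution hz₀ hz',
          diskInvolution_diskInvolution hb (mem_ball_zero_iff.mp (hmaps hz))]
    _ = _ := by rw [hgC _ (mapsTo_diskInvolution hz₀ hz), hfu z hz', diskInvolution]
end

section
/- For 0 < r < 1, the Euclidean arc length of the upper boundary arc of ⋃_{x∈(-1,1)} D_ρ(x,r) (the arc of the circle of center -i(1-r²)/(2r) and radius (1+r²)/(2r) joining -1 to 1 inside the closed unit disk) equals 2·((1+r²)/r)·arctan r. -/
open Complex

/-!
The arc is the part of the circle `circleMap c R` with `c = -i(1-r²)/(2r)` and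
`R = (1+r²)/(2r)` between the angles `α = arctan((1-r²)/(2r))` and `π - α`. A circle is
traversed at constant speed `R`, so the length is `R (π - 2α)`, and `α = π/2 - 2 arctan r`
because `tan (π/2 - 2a) = 1 / tan (2a) = (1 - tan² a) / (2 tan a)`.
-/

theorem Real.arctan_one_sub_sq_div_two_mul {r : ℝ} (hr : 0 < r) :
    Real.arctan ((1 - r ^ 2) / (2 * r)) = Real.pi / 2 - 2 * Real.arctan r := by
  have hpos : 0 < Real.arctan r := by simpa using Real.arctan_strictMono hr
  have hlt : Real.arctan r < Real.pi / 2 := Real.arctan_lt_pi_div_two r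
  have htan : Real.tan (Real.pi / 2 - 2 * Real.arctan r) = (1 - r ^ 2) / (2 * r) := by
    rw [Real.tan_pi_div_two_sub, Real.tan_two_mul, Real.tan_arctan, inv_div]
  rw [← htan, Real.arctan_tan] <;> linarith

theorem intervalIntegral_norm_deriv_circleMap (c : ℂ) (R a b : ℝ) :
    ∫ θ in a..b, ‖deriv (circleMap c R) θ‖ = (b - a) * |R| := by
  simp [norm_circleMap_zero]

theorem arc_length_of_upper_boundary_general (r : ℝ) (hr0 : 0 < r) :
    (∫ θ in Real.arctan ((1 - r ^ 2) / (2 * r))..(Real.pi - Real.arctan ((1 - r ^ 2) / (2 * r))),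
        ‖deriv (fun t : ℝ =>
          -Complex.I * ((1 - r ^ 2) / (2 * r)) +
            ((1 + r ^ 2) / (2 * r)) * Complex.exp (t * Complex.I)) θ‖) =
      2 * ((1 + r ^ 2) / r) * Real.arctan r := by
  have hcircle : (fun t : ℝ => -Complex.I * ((1 - r ^ 2) / (2 * r)) +
      ((1 + r ^ 2) / (2 * r)) * Complex.exp (t * Complex.I)) =
      circleMap (-Complex.I * ((1 - r ^ 2) / (2 * r))) ((1 + r ^ 2) / (2 * r)) := by
    ext t
    simp [circleMap]
  rw [hcircle, intervalIntegral_norm_deriv_circleMap, Real.arctan_one_sub_sq_div_two_mul hr0,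
    abs_of_pos (by positivity)]
  field_simp
  ring

theorem arc_length_of_upper_boundary (r : ℝ) (hr0 : 0 < r) (hr1 : r < 1) :
    (∫ θ in Real.arctan ((1 - r ^ 2) / (2 * r))..(Real.pi - Real.arctan ((1 - r ^ 2) / (2 * r))),
        ‖deriv (fun t : ℝ =>
          -Complex.I * ((1 - r ^ 2) / (2 * r)) +
            ((1 + r ^ 2) / (2 * r)) * Complex.exp (t * Complex.I)) θ‖) =
      2 * ((1 + r ^ 2) / r) * Real.arctan r :=
  arc_length_of_upper_boundary_general r hr0
end
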